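/- Let H = ℂ^a ⊗ ℂ^b, let ψ ∈ H be a unit vector, and let E(ρ) = ∑_i (M_i ⊗ I_b) ρ (M_i ⊗ I_b)† be a CPTP map whose Kraus operators act only on the first tensor factor (∑_i (M_i ⊗ I_b)†(M_i ⊗ I_b) = I) and which leaves the target invariant: E(|ψ⟩⟨ψ|) = |ψ⟩⟨ψ|. Let Π = Π_A ⊗ I_b, where Π_A is the orthogonal projection of ℂ^a onto the range of Tr_B(|ψ⟩⟨ψ|). Then for every a·b × a·b matrix ρ: Π E(ρ) Π = Π ρ Π + Π σ Π, where σ = E((I − Π) ρ (I − Π)); moreover σ is positive semidefinite whenever ρ is. -/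

import Mathlib

/-!
Invariance writes `|ψ⟩⟨ψ|` as the sum of the rank-one matrices `|Kᵢψ⟩⟨Kᵢψ|`, `Kᵢ = Mᵢ ⊗ I`,
which forces `Kᵢψ = cᵢψ`. Read slice by slice along the second factor, this says that `Mᵢ`
acts as the scalar `cᵢ` on the range of `Tr_B |ψ⟩⟨ψ|`, so `Kᵢ Π = cᵢ Π`. Together with
`∑ᵢ Kᵢ† Kᵢ = 1` this gives `∑ᵢ conj(cᵢ) Π Kᵢ = Π`, hence `Π E(X Π) Π = Π X Π` and, taking
adjoints, `Π E(Π X) Π = Π X Π`. Splitting `ρ = Π ρ + (1 - Π) ρ Π + (1 - Π) ρ (1 - Π)`, the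
middle term is killed by the outer `Π`.
-/

open scoped BigOperators Matrix Kronecker ComplexOrder

namespace Stab

/-- Partial trace over the second tensor factor. -/
noncomputable def ptraceB {a b : ℕ} (M : Matrix (Fin a × Fin b) (Fin a × Fin b) ℂ) :
    Matrix (Fin a) (Fin a) ℂ :=
  fun i i' => ∑ j, M (i, j) (i', j)

/-- The rank-one projector `|ψ⟩⟨ψ|`. -/
noncomputable def proj {ι : Type*} (ψ : ι → ℂ) : Matrix ι ι ℂ :=
  fun x y => ψ x * (starRingEnd ℂ) (ψ y)

/-- `P` is the orthogonal projection matrix onto the subspace `V`. -/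
def IsOrthProjOnto {ι : Type*} [Fintype ι] [DecidableEq ι]
    (P : Matrix ι ι ℂ) (V : Submodule ℂ (ι → ℂ)) : Prop :=
  Pᴴ = P ∧ P * P = P ∧ LinearMap.range P.mulVecLin = V

open Matrix

section Kraus

variable {n κ R : Type*} [Fintype n] [Fintype κ]

def krausMap [Semiring R] [Star R] (K : κ → Matrix n n R) (ρ : Matrix n n R) : Matrix n n R :=
  ∑ i, K i * ρ * (K i)ᴴ

theorem krausMap_add [Semiring R] [Star R] (K : κ → Matrix n n R) (ρ σ : Matrix n n R) :
    krausMap K (ρ + σ) = krausMap K ρ + krausMap K σ := by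
  simp only [krausMap, mul_add, add_mul, Finset.sum_add_distrib]

theorem conjTranspose_krausMap [Semiring R] [StarRing R] (K : κ → Matrix n n R)
    (ρ : Matrix n n R) : (krausMap K ρ)ᴴ = krausMap K ρᴴ := by
  simp only [krausMap, conjTranspose_sum, conjTranspose_mul, conjTranspose_conjTranspose,
    mul_assoc]

theorem _root_.Matrix.PosSemidef.krausMap [Ring R] [PartialOrder R] [StarRing R]
    [AddLeftMono R] {ρ : Matrix n n R} (hρ : ρ.PosSemidef) (K : κ → Matrix n n R) :
    (Stab.krausMap K ρ).PosSemidef :=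
  posSemidef_sum _ fun i _ => hρ.mul_mul_conjTranspose_same (K i)

section Compression

variable [CommRing R] [StarRing R] {K : κ → Matrix n n R} {P : Matrix n n R} {c : κ → R}

omit [Fintype κ] in
theorem mul_conjTranspose_eq_star_smul (hP : Pᴴ = P) (hKP : ∀ i, K i * P = c i • P) (i : κ) :
    P * (K i)ᴴ = star (c i) • P := by
  simpa [hP] using congrArg conjTranspose (hKP i)

theorem sum_star_smul_mul_eq [DecidableEq n] (hP : Pᴴ = P) (htp : ∑ i, (K i)ᴴ * K i = 1)
    (hKP : ∀ i, K i * P = c i • P) : ∑ i, star (c i) • (P * K i) = P := by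
  simp only [← smul_mul_assoc, ← mul_conjTranspose_eq_star_smul hP hKP, mul_assoc,
    ← Finset.mul_sum, htp, mul_one]

theorem compress_krausMap_mul_right [DecidableEq n] (hP : Pᴴ = P) (hPP : P * P = P)
    (htp : ∑ i, (K i)ᴴ * K i = 1) (hKP : ∀ i, K i * P = c i • P) (Y : Matrix n n R) :
    P * krausMap K (Y * P) * P = P * Y * P := by
  calc P * krausMap K (Y * P) * P = ∑ i, star (c i) • (P * K i) * Y * P := by
        simp only [krausMap, Finset.mul_sum, Finset.sum_mul]
        refine Finset.sum_congr rfl fun i _ => ?_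
        simp only [mul_assoc]
        rw [← mul_assoc P (K i)ᴴ, mul_conjTranspose_eq_star_smul hP hKP, smul_mul_assoc, hPP]
        simp only [smul_mul_assoc, mul_smul_comm, mul_assoc]
    _ = P * Y * P := by
        rw [← Finset.sum_mul, ← Finset.sum_mul, sum_star_smul_mul_eq hP htp hKP]

theorem compress_krausMap_mul_left [DecidableEq n] (hP : Pᴴ = P) (hPP : P * P = P)
    (htp : ∑ i, (K i)ᴴ * K i = 1) (hKP : ∀ i, K i * P = c i • P) (Y : Matrix n n R) :
    P * krausMap K (P * Y) * P = P * Y * P := by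
  simpa [conjTranspose_krausMap, hP, mul_assoc] using
    congrArg conjTranspose (compress_krausMap_mul_right hP hPP htp hKP Yᴴ)

theorem compress_krausMap [DecidableEq n] (hP : Pᴴ = P) (hPP : P * P = P)
    (htp : ∑ i, (K i)ᴴ * K i = 1) (hKP : ∀ i, K i * P = c i • P) (ρ : Matrix n n R) :
    P * krausMap K ρ * P = P * ρ * P + P * krausMap K ((1 - P) * ρ * (1 - P)) * P := by
  have hsplit : ρ = P * ρ + (1 - P) * ρ * P + (1 - P) * ρ * (1 - P) := by noncomm_ring
  have hcross : P * ((1 - P) * ρ) * P = 0 := by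
    rw [← mul_assoc, mul_sub, mul_one, hPP, sub_self, zero_mul, zero_mul]
  conv_lhs => rw [hsplit]
  rw [krausMap_add, krausMap_add, mul_add, mul_add, add_mul, add_mul,
    compress_krausMap_mul_left hP hPP htp hKP, compress_krausMap_mul_right hP hPP htp hKP, hcross,
    add_zero]

end Compression

end Kraus

section RankOne

theorem proj_eq_vecMulVec {ι : Type*} (ψ : ι → ℂ) : proj ψ = vecMulVec ψ (star ψ) := rfl

variable {ι κ : Type*} [Fintype ι] [Fintype κ]

theorem mul_proj_mul_conjTranspose {m : Type*} (K : Matrix m ι ℂ) (ψ : ι → ℂ) :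
    K * proj ψ * Kᴴ = proj (K *ᵥ ψ) := by
  rw [proj_eq_vecMulVec, proj_eq_vecMulVec, mul_vecMulVec, vecMulVec_mul, star_mulVec]

theorem star_dotProduct_proj_mulVec (v w : ι → ℂ) :
    star v ⬝ᵥ proj w *ᵥ v = Complex.normSq (star v ⬝ᵥ w) := by
  rw [proj_eq_vecMulVec, vecMulVec_mulVec, dotProduct_smul, op_smul_eq_mul,
    star_dotProduct (v := w), ← Complex.mul_conj, Complex.star_def]

theorem exists_eq_smul_of_sum_proj_eq_proj {w : κ → ι → ℂ} {ψ : ι → ℂ}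
    (h : ∑ i, proj (w i) = proj ψ) (i : κ) : ∃ c : ℂ, w i = c • ψ := by
  have horth : ∀ v, star v ⬝ᵥ ψ = 0 → star v ⬝ᵥ w i = 0 := by
    intro v hv
    have hsum : ∑ j, Complex.normSq (star v ⬝ᵥ w j) = 0 := by
      have := congrArg (fun A => star v ⬝ᵥ A *ᵥ v) h
      simp only [sum_mulVec, dotProduct_sum, star_dotProduct_proj_mulVec, hv, map_zero] at this
      exact_mod_cast this
    rw [Finset.sum_eq_zero_iff_of_nonneg fun j _ => Complex.normSq_nonneg _] at hsum
    exact Complex.normSq_eq_zero.mp (hsum i (Finset.mem_univ i))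
  -- for `ψ = 0` the quotient is `0 / 0 = 0`, which is still the right coefficient
  refine ⟨(star ψ ⬝ᵥ w i) / (star ψ ⬝ᵥ ψ), ?_⟩
  set v := w i - ((star ψ ⬝ᵥ w i) / (star ψ ⬝ᵥ ψ)) • ψ
  have hv : star v ⬝ᵥ ψ = 0 := by
    rw [star_dotProduct, star_eq_zero, dotProduct_sub, dotProduct_smul, smul_eq_mul]
    by_cases hψ : ψ = 0
    · simp [hψ]
    · rw [div_mul_cancel₀ _ (dotProduct_star_self_eq_zero.not.mpr hψ), sub_self]
  rw [← sub_eq_zero, ← dotProduct_star_self_eq_zero]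
  change star v ⬝ᵥ v = 0
  rw [dotProduct_sub, dotProduct_smul, horth v hv, hv, smul_zero, sub_zero]

end RankOne

theorem kronecker_one_mulVec_apply {R l m p : Type*} [CommSemiring R] [Fintype m] [Fintype p]
    [DecidableEq p] (A : Matrix l m R) (ψ : m × p → R) (x : l) (j : p) :
    ((A ⊗ₖ (1 : Matrix p p R)) *ᵥ ψ) (x, j) = (A *ᵥ fun z => ψ (z, j)) x := by
  simp [mulVec, dotProduct, Fintype.sum_prod_type, one_apply]

theorem ptraceB_proj {a b : ℕ} (ψ : Fin a × Fin b → ℂ) :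
    ptraceB (proj ψ) = ∑ j, proj fun x => ψ (x, j) := by
  ext x y
  simp [ptraceB, proj, Matrix.sum_apply]

theorem mul_ptraceB_proj_eq_smul {a b : ℕ} {A : Matrix (Fin a) (Fin a) ℂ}
    {ψ : Fin a × Fin b → ℂ} {c : ℂ} (h : (A ⊗ₖ (1 : Matrix (Fin b) (Fin b) ℂ)) *ᵥ ψ = c • ψ) :
    A * ptraceB (proj ψ) = c • ptraceB (proj ψ) := by
  have hslice (j : Fin b) : (A *ᵥ fun x => ψ (x, j)) = c • fun x => ψ (x, j) := by
    ext x
    simpa [kronecker_one_mulVec_apply] using congrFun h (x, j)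
  rw [ptraceB_proj]
  simp only [Finset.mul_sum, Finset.smul_sum, proj_eq_vecMulVec, mul_vecMulVec,
    hslice, smul_vecMulVec]

theorem mul_eq_smul_of_range_le {R n : Type*} [CommRing R] [Fintype n]
    {A S P : Matrix n n R} {c : R} (hS : A * S = c • S)
    (hP : LinearMap.range P.mulVecLin ≤ LinearMap.range S.mulVecLin) : A * P = c • P := by
  refine mulVec_injective (funext fun v => ?_)
  obtain ⟨u, hu : S *ᵥ u = P *ᵥ v⟩ := hP ⟨v, rfl⟩
  rw [← mulVec_mulVec, smul_mulVec, ← hu, mulVec_mulVec, hS, smul_mulVec]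

theorem local_invariant_map_structure_general {a b : ℕ}
    (ψ : Fin a × Fin b → ℂ)
    (m : ℕ) (M : Fin m → Matrix (Fin a) (Fin a) ℂ)
    (E : Matrix (Fin a × Fin b) (Fin a × Fin b) ℂ →
         Matrix (Fin a × Fin b) (Fin a × Fin b) ℂ)
    (hE : ∀ ρ, E ρ = ∑ i, (M i ⊗ₖ (1 : Matrix (Fin b) (Fin b) ℂ)) * ρ *
        (M i ⊗ₖ (1 : Matrix (Fin b) (Fin b) ℂ))ᴴ)
    (htp : ∑ i, (M i ⊗ₖ (1 : Matrix (Fin b) (Fin b) ℂ))ᴴ *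
        (M i ⊗ₖ (1 : Matrix (Fin b) (Fin b) ℂ)) = 1)
    (hinv : E (proj ψ) = proj ψ)
    (PA : Matrix (Fin a) (Fin a) ℂ)
    (hPA : IsOrthProjOnto PA (LinearMap.range (ptraceB (proj ψ)).mulVecLin)) :
    ∀ ρ : Matrix (Fin a × Fin b) (Fin a × Fin b) ℂ,
      (PA ⊗ₖ (1 : Matrix (Fin b) (Fin b) ℂ)) * E ρ * (PA ⊗ₖ 1) =
        (PA ⊗ₖ 1) * ρ * (PA ⊗ₖ 1) +
        (PA ⊗ₖ 1) * E ((1 - PA ⊗ₖ 1) * ρ * (1 - PA ⊗ₖ 1)) * (PA ⊗ₖ 1) ∧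
      (ρ.PosSemidef → (E ((1 - PA ⊗ₖ 1) * ρ * (1 - PA ⊗ₖ 1))).PosSemidef) := by
  obtain ⟨hPAh, hPAidem, hPArange⟩ := hPA
  obtain rfl : E = krausMap fun i => M i ⊗ₖ (1 : Matrix (Fin b) (Fin b) ℂ) := funext hE
  have hrankOne : ∑ i, proj ((M i ⊗ₖ (1 : Matrix (Fin b) (Fin b) ℂ)) *ᵥ ψ) = proj ψ := by
    simpa only [krausMap, mul_proj_mul_conjTranspose] using hinv
  have hfix (i : Fin m) : ∃ c : ℂ, M i * PA = c • PA := by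
    obtain ⟨c, hc⟩ := exists_eq_smul_of_sum_proj_eq_proj hrankOne i
    exact ⟨c, mul_eq_smul_of_range_le (mul_ptraceB_proj_eq_smul hc) hPArange.le⟩
  choose c hc using hfix
  have hP : (PA ⊗ₖ (1 : Matrix (Fin b) (Fin b) ℂ))ᴴ = PA ⊗ₖ 1 := by
    rw [conjTranspose_kronecker, hPAh, conjTranspose_one]
  have hPP : (PA ⊗ₖ (1 : Matrix (Fin b) (Fin b) ℂ)) * (PA ⊗ₖ 1) = PA ⊗ₖ 1 := by
    rw [← mul_kronecker_mul, hPAidem, one_mul]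
  have hKP (i : Fin m) :
      (M i ⊗ₖ (1 : Matrix (Fin b) (Fin b) ℂ)) * (PA ⊗ₖ 1) = c i • (PA ⊗ₖ 1) := by
    rw [← mul_kronecker_mul, hc, one_mul, smul_kronecker]
  have hQ : (1 - PA ⊗ₖ (1 : Matrix (Fin b) (Fin b) ℂ))ᴴ = 1 - PA ⊗ₖ 1 := by
    rw [conjTranspose_sub, conjTranspose_one, hP]
  intro ρ
  refine ⟨compress_krausMap hP hPP htp hKP ρ, fun hρ => ?_⟩
  have h := (hρ.mul_mul_conjTranspose_same (1 - PA ⊗ₖ 1)).krausMap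
    fun i => M i ⊗ₖ (1 : Matrix (Fin b) (Fin b) ℂ)
  rwa [hQ] at h

/-- Lemma 2, structure of invariance-obeying local maps: let
`E(ρ) = ∑ᵢ (Mᵢ ⊗ I) ρ (Mᵢ ⊗ I)†` be a CPTP map acting only on the first factor of
`ℂ^a ⊗ ℂ^b` which leaves `|ψ⟩⟨ψ|` invariant, and let `Pr = Π_A ⊗ I` with `Pr_A` the
orthogonal projection onto the range of `Tr_B |ψ⟩⟨ψ|`. Then
`Pr E(ρ) Π = Π ρ Π + Π σ Π` where `σ = E((1-Π) ρ (1-Π))`, and `σ` is positive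
semidefinite whenever `ρ` is. -/
theorem local_invariant_map_structure {a b : ℕ}
    (ψ : Fin a × Fin b → ℂ) (hψ : ∑ x, Complex.normSq (ψ x) = 1)
    (m : ℕ) (M : Fin m → Matrix (Fin a) (Fin a) ℂ)
    (E : Matrix (Fin a × Fin b) (Fin a × Fin b) ℂ →
         Matrix (Fin a × Fin b) (Fin a × Fin b) ℂ)
    (hE : ∀ ρ, E ρ = ∑ i, (M i ⊗ₖ (1 : Matrix (Fin b) (Fin b) ℂ)) * ρ *
        (M i ⊗ₖ (1 : Matrix (Fin b) (Fin b) ℂ))ᴴ)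
    (htp : ∑ i, (M i ⊗ₖ (1 : Matrix (Fin b) (Fin b) ℂ))ᴴ *
        (M i ⊗ₖ (1 : Matrix (Fin b) (Fin b) ℂ)) = 1)
    (hinv : E (proj ψ) = proj ψ)
    (PA : Matrix (Fin a) (Fin a) ℂ)
    (hPA : IsOrthProjOnto PA (LinearMap.range (ptraceB (proj ψ)).mulVecLin)) :
    ∀ ρ : Matrix (Fin a × Fin b) (Fin a × Fin b) ℂ,
      (PA ⊗ₖ (1 : Matrix (Fin b) (Fin b) ℂ)) * E ρ * (PA ⊗ₖ 1) =
        (PA ⊗ₖ 1) * ρ * (PA ⊗ₖ 1) +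
        (PA ⊗ₖ 1) * E ((1 - PA ⊗ₖ 1) * ρ * (1 - PA ⊗ₖ 1)) * (PA ⊗ₖ 1) ∧
      (ρ.PosSemidef → (E ((1 - PA ⊗ₖ 1) * ρ * (1 - PA ⊗ₖ 1))).PosSemidef) :=
  local_invariant_map_structure_general ψ m M E hE htp hinv PA hPA

end Stab
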